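/- arXiv:math/0701889 — 2 statements merged into one kernel-verified Lean document; each statement's English description precedes it below -/
import Mathlib

section
/- Let n ≥ 6 be an integer and set δ = n/2 (so n is even), and assume δ ≥ 3. Let r be the largest integer with δ ≥ 2r+1, and suppose 2^r divides n − δ. Then δ is even, δ = 2r+2, n = 4(r+1), there is an integer m ≥ 1 with m·2^{r+1} = n, and consequently n = 8 or n = 16. -/
/-- Numerical heart of the proof that LQEL-manifolds of type δ = n/2
occur only in dimensions 8 or 16 (for n ≥ 6). -/
theorem stmt_2 (n δ r : ℕ) (hn : 6 ≤ n) (hδ : 2 * δ = n) (hδ3 : 3 ≤ δ)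
    (hrdef : r = (δ - 1) / 2) (hdvd : 2 ^ r ∣ n - δ) :
    Even δ ∧ δ = 2 * r + 2 ∧ n = 4 * (r + 1) ∧
      (∃ m : ℕ, 1 ≤ m ∧ m * 2 ^ (r + 1) = n) ∧ (n = 8 ∨ n = 16) := by
  have h1 : n - δ = δ := by omega
  rw [h1] at hdvd
  have h2 : 2 ^ r ≤ δ := Nat.le_of_dvd (by omega) hdvd
  have h3 : 2 * r + 1 ≤ δ ∧ δ ≤ 2 * r + 2 := by omega
  have key : ∀ k, 2 * (k + 4) + 2 < 2 ^ (k + 4) := by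
    intro k
    induction k with
    | zero => norm_num
    | succ k ih => rw [pow_succ]; omega
  have hr : r ≤ 3 := by
    by_contra h
    push_neg at h
    have := key (r - 4)
    have hre : r - 4 + 4 = r := by omega
    rw [hre] at this
    omega
  interval_cases r <;> norm_num at hdvd <;>
    [omega; skip; omega; skip]
  · have hδ4 : δ = 4 := by omega
    refine ⟨⟨2, by omega⟩, by omega, by omega, ⟨2, by norm_num, by omega⟩, by omega⟩
  · have hδ8 : δ = 8 := by omega
    refine ⟨⟨4, by omega⟩, by omega, by omega, ⟨1, by norm_num, by omega⟩, by omega⟩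
end

section
/- Let d ≥ 3 and n ≥ 1 be integers with δ := (n+2)/d − 1 an integer satisfying δ ≥ 3. Let r be the largest integer with δ ≥ 2r+1 and suppose 2^r divides n − δ. Then δ, n and d are all even. -/
/-- Arithmetic core of the theorem on special Cremona transformations of type
(2,d): if δ = (n+2)/d − 1 ≥ 3 and 2^r ∣ n − δ with r = ⌊(δ−1)/2⌋, then
δ, n and d are all even. -/
theorem stmt_3 (d n δ r : ℕ) (hd : 3 ≤ d) (hn : 1 ≤ n)
    (hδdef : n + 2 = d * (δ + 1)) (hδ3 : 3 ≤ δ)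
    (hrdef : r = (δ - 1) / 2) (hdvd : 2 ^ r ∣ n - δ) :
    Even δ ∧ Even n ∧ Even d := by
  have hr1 : 1 ≤ r := by omega
  have hnδ : δ ≤ n := by nlinarith
  have h2 : 2 ∣ n - δ := dvd_trans (dvd_pow_self 2 (by omega : r ≠ 0)) hdvd
  have hδeven : Even δ := by
    rcases Nat.even_or_odd δ with h | h
    · exact h
    · exfalso
      obtain ⟨m, hm⟩ := h
      have hkey : n + 2 = 2 * (d * (m + 1)) := by rw [hδdef, hm]; ring
      omega
  obtain ⟨m, hm⟩ := hδeven
  have hneven : Even n := by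
    refine ⟨(n - δ) / 2 + m, ?_⟩
    omega
  refine ⟨⟨m, hm⟩, hneven, ?_⟩
  have : Even (d * (δ + 1)) := by rw [← hδdef]; exact ⟨(n + 2) / 2, by omega⟩
  rcases Nat.even_mul.mp this with h | h
  · exact h
  · obtain ⟨k, hk⟩ := h; omega
end
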